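/- arXiv:2211.09275 — 5 statements merged into one kernel-verified Lean document; each statement's English description precedes it below -/
import Mathlib

section
/- Let M_1, …, M_p be m×n real matrices that are linearly independent, let x_1, …, x_N be vectors in ℝⁿ, and let c ≥ 0 satisfy ∑_{k=1}^{N} x_k x_kᵀ ⪰ c·I in the Loewner order. Then there exists σ > 0 (depending only on M_1, …, M_p) such that for every θ ∈ ℝ^p, ∑_{k=1}^{N} ‖(∑_{i=1}^{p} θ_i M_i) x_k‖² ≥ c·σ²·‖θ‖². Equivalently, the p×p matrix whose (i,j) entry is ∑_{k=1}^{N} (M_i x_k)ᵀ(M_j x_k) satisfies the Loewner bound ⪰ c·σ²·I. -/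
/-!
Linear independence makes `θ ↦ ∑ θᵢ Mᵢ` an injective linear map on a finite-dimensional space,
hence bounded below: `‖∑ θᵢ Mᵢ‖_F ≥ σ ‖θ‖`. Applying the Loewner bound to each row `a` of
`A = ∑ θᵢ Mᵢ` gives `∑ₖ (a ⬝ xₖ)² ≥ c ‖a‖²`, and summing over the rows gives
`∑ₖ ‖A xₖ‖² ≥ c ‖A‖_F² ≥ c σ² ‖θ‖²`.
-/

open Matrix

theorem LinearIndependent.exists_pos_mul_norm_le_norm_sum_smul {ι E : Type*} [Fintype ι]
    [NormedAddCommGroup E] [NormedSpace ℝ E] {v : ι → E} (hv : LinearIndependent ℝ v) :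
    ∃ σ > 0, ∀ θ : EuclideanSpace ℝ ι, σ * ‖θ‖ ≤ ‖∑ i, θ i • v i‖ := by
  let f := Fintype.linearCombination ℝ v ∘ₗ (WithLp.linearEquiv 2 ℝ (ι → ℝ)).toLinearMap
  have hf : LinearMap.ker f = ⊥ := by
    rw [LinearMap.ker_eq_bot]
    exact hv.fintypeLinearCombination_injective.comp (WithLp.linearEquiv 2 ℝ _).injective
  obtain ⟨K, -, hK⟩ := f.exists_antilipschitzWith hf
  exact antilipschitzWith_iff_exists_mul_le_norm.mp ⟨K, hK⟩

namespace Matrix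

variable {ι m n : Type*} [Fintype ι] [Fintype m] [Fintype n]

section Frobenius

attribute [local instance] Matrix.frobeniusNormedAddCommGroup Matrix.frobeniusNormedSpace

theorem frobenius_norm_sq_eq_sum_dotProduct (A : Matrix m n ℝ) :
    ‖A‖ ^ 2 = ∑ i, A i ⬝ᵥ A i := by
  rw [frobenius_norm_def, ← Real.sqrt_eq_rpow, Real.sq_sqrt (by positivity)]
  simp [dotProduct, sq]

theorem exists_pos_sq_mul_dotProduct_le_sum_dotProduct_sum_smul {M : ι → Matrix m n ℝ}
    (hM : LinearIndependent ℝ M) :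
    ∃ σ > 0, ∀ θ : ι → ℝ,
      σ ^ 2 * (θ ⬝ᵥ θ) ≤ ∑ i, (∑ j, θ j • M j) i ⬝ᵥ (∑ j, θ j • M j) i := by
  obtain ⟨σ, hσ, hbound⟩ := hM.exists_pos_mul_norm_le_norm_sum_smul
  refine ⟨σ, hσ, fun θ => ?_⟩
  have hθ : ‖WithLp.toLp 2 θ‖ ^ 2 = θ ⬝ᵥ θ := by
    rw [EuclideanSpace.real_norm_sq_eq]
    simp [dotProduct, sq]
  rw [← frobenius_norm_sq_eq_sum_dotProduct, ← hθ, ← mul_pow]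
  exact pow_le_pow_left₀ (by positivity) (hbound (WithLp.toLp 2 θ)) 2

end Frobenius

theorem dotProduct_sum_vecMulVec_self_mulVec (x : ι → n → ℝ) (v : n → ℝ) :
    v ⬝ᵥ ((∑ k, vecMulVec (x k) (x k)) *ᵥ v) = ∑ k, (v ⬝ᵥ x k) ^ 2 := by
  simp only [sum_mulVec, dotProduct_sum, vecMulVec_mulVec]
  refine Finset.sum_congr rfl fun k _ => ?_
  simp [dotProduct_smul, dotProduct_comm, sq]

theorem PosSemidef.mul_dotProduct_self_le_sum_sq [DecidableEq n] {x : ι → n → ℝ} {c : ℝ}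
    (h : (∑ k, vecMulVec (x k) (x k) - c • 1).PosSemidef) (v : n → ℝ) :
    c * (v ⬝ᵥ v) ≤ ∑ k, (v ⬝ᵥ x k) ^ 2 := by
  have h := (posSemidef_iff_dotProduct_mulVec.mp h).2 v
  rw [star_trivial, sub_mulVec, dotProduct_sub, dotProduct_sum_vecMulVec_self_mulVec, smul_mulVec,
    one_mulVec, dotProduct_smul, smul_eq_mul] at h
  exact sub_nonneg.mp h

theorem mul_sum_dotProduct_self_le_sum_mulVec {x : ι → n → ℝ} {c : ℝ}
    (hx : ∀ v, c * (v ⬝ᵥ v) ≤ ∑ k, (v ⬝ᵥ x k) ^ 2) (A : Matrix m n ℝ) :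
    c * ∑ i, A i ⬝ᵥ A i ≤ ∑ k, (A *ᵥ x k) ⬝ᵥ (A *ᵥ x k) :=
  calc c * ∑ i, A i ⬝ᵥ A i
      ≤ ∑ i, ∑ k, (A i ⬝ᵥ x k) ^ 2 := by
        rw [Finset.mul_sum]; exact Finset.sum_le_sum fun i _ => hx (A i)
    _ = ∑ k, (A *ᵥ x k) ⬝ᵥ (A *ᵥ x k) := by
        rw [Finset.sum_comm]
        exact Finset.sum_congr rfl fun k _ => by simp only [sq]; rfl

end Matrix

/-- If `M_1, …, M_p` are linearly independent, then there exists `σ > 0` (depending only on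
the `M_i`) such that whenever `∑_k x_k x_kᵀ ⪰ c·I` with `c ≥ 0`,
`∑_k ‖(∑_i θ_i M_i) x_k‖² ≥ c·σ²·‖θ‖²` for every `θ`. -/
theorem sum_sq_regressor_lower_bound (m n p : ℕ)
    (M : Fin p → Matrix (Fin m) (Fin n) ℝ)
    (hM : ∀ θ : Fin p → ℝ, ∑ i, θ i • M i = 0 → θ = 0) :
    ∃ σ > (0 : ℝ), ∀ (N : ℕ) (x : Fin N → Fin n → ℝ) (c : ℝ), 0 ≤ c →
      ((∑ k, (Matrix.of fun i j => x k i * x k j : Matrix (Fin n) (Fin n) ℝ))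
        - c • (1 : Matrix (Fin n) (Fin n) ℝ)).PosSemidef →
      ∀ θ : Fin p → ℝ,
        ∑ k, ((∑ i, θ i • M i).mulVec (x k)) ⬝ᵥ ((∑ i, θ i • M i).mulVec (x k)) ≥
          c * σ ^ 2 * (θ ⬝ᵥ θ) := by
  have hlin : LinearIndependent ℝ M :=
    Fintype.linearIndependent_iff.mpr fun θ hθ => congrFun (hM θ hθ)
  obtain ⟨σ, hσ, hMσ⟩ := exists_pos_sq_mul_dotProduct_le_sum_dotProduct_sum_smul hlin
  refine ⟨σ, hσ, fun N x c hc hx θ => ?_⟩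
  have hx : (∑ k, vecMulVec (x k) (x k) - c • 1).PosSemidef := hx
  calc c * σ ^ 2 * (θ ⬝ᵥ θ)
      ≤ c * ∑ i, (∑ j, θ j • M j) i ⬝ᵥ (∑ j, θ j • M j) i := by
        rw [mul_assoc]; exact mul_le_mul_of_nonneg_left (hMσ θ) hc
    _ ≤ _ := mul_sum_dotProduct_self_le_sum_mulVec hx.mul_dotProduct_self_le_sum_sq _
end

section
/- Let (Ω, 𝔽, ℙ) be a probability space, let A ∈ ℝ^{n×n}, F ∈ ℝ^{n×m}, x_0 ∈ ℝⁿ (deterministic), and let w_0, w_1, w_2, … be square-integrable ℝ^m-valued random vectors that are pairwise independent, each with mean zero (𝔼[w_t] = 0), and satisfying 𝔼[⟨v, w_t⟩²] ≥ ε_w·‖v‖² for some ε_w > 0, all t ∈ ℕ and all v ∈ ℝ^m. Define the random process x_{k+1} = A x_k + F w_k. Then for every k ∈ ℕ and every v ∈ ℝⁿ, 𝔼[⟨v, x_k⟩²] ≥ ε_w · ∑_{j=0}^{k-1} ‖Fᵀ (Aᵀ)^j v‖². -/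
/-!
Unrolling the recursion, `⟨v, x_k⟩ = ⟨(Aᵀ)^k v, x₀⟩ + ∑_{j<k} ⟨Fᵀ (Aᵀ)^j v, w_{k-1-j}⟩`: a
deterministic constant plus a sum of pairwise independent, mean-zero terms. Its second moment
dominates its variance, which by pairwise independence is the sum of the variances of the terms,
and these are their second moments `𝔼[⟨Fᵀ (Aᵀ)^j v, w_{k-1-j}⟩²] ≥ ε_w ‖Fᵀ (Aᵀ)^j v‖²`.
-/

open Matrix MeasureTheory ProbabilityTheory Finset

theorem dotProduct_eq_of_mulVec_recursion {R ι κ : Type*} [CommSemiring R] [Fintype ι]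
    [Fintype κ] [DecidableEq ι] (A : Matrix ι ι R) (F : Matrix ι κ R) (x : ℕ → ι → R)
    (u : ℕ → κ → R) (hx : ∀ k, x (k + 1) = A *ᵥ x k + F *ᵥ u k) (k : ℕ) (v : ι → R) :
    v ⬝ᵥ x k = (Aᵀ ^ k *ᵥ v) ⬝ᵥ x 0 + ∑ j ∈ range k, (Fᵀ *ᵥ (Aᵀ ^ j *ᵥ v)) ⬝ᵥ u (k - 1 - j) := by
  induction k generalizing v with
  | zero => simp
  | succ k ih =>
    rw [hx, dotProduct_add, dotProduct_mulVec, dotProduct_mulVec, ← mulVec_transpose,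
      ← mulVec_transpose, ih, sum_range_succ', add_assoc]
    simp only [mulVec_mulVec, pow_succ, pow_zero, one_mulVec, Nat.add_sub_cancel, Nat.sub_zero,
      Nat.sub_sub, add_comm 1]

section DotProduct

variable {Ω κ : Type*} [MeasurableSpace Ω] {μ : Measure Ω} [Fintype κ] {X : Ω → κ → ℝ}

theorem memLp_dotProduct {p : ENNReal} (a : κ → ℝ) (hX : ∀ i, MemLp (fun ω => X ω i) p μ) :
    MemLp (fun ω => a ⬝ᵥ X ω) p μ :=
  memLp_finsetSum _ fun i _ => (hX i).const_mul (a i)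

theorem integral_dotProduct (a : κ → ℝ) (hX : ∀ i, Integrable (fun ω => X ω i) μ) :
    ∫ ω, a ⬝ᵥ X ω ∂μ = a ⬝ᵥ fun i => ∫ ω, X ω i ∂μ := by
  simp only [dotProduct]
  rw [integral_finsetSum _ fun i _ => (hX i).const_mul (a i)]
  simp only [integral_const_mul]

theorem ProbabilityTheory.IndepFun.dotProduct {κ' : Type*} [Fintype κ'] {Y : Ω → κ' → ℝ}
    (hXY : IndepFun X Y μ) (a : κ → ℝ) (b : κ' → ℝ) :
    IndepFun (fun ω => a ⬝ᵥ X ω) (fun ω => b ⬝ᵥ Y ω) μ :=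
  hXY.comp (continuous_const.dotProduct continuous_id).measurable
    (continuous_const.dotProduct continuous_id).measurable

end DotProduct

theorem sum_integral_sq_le_integral_sq_const_add_sum {Ω ι : Type*} [MeasurableSpace Ω]
    {μ : Measure Ω} [IsProbabilityMeasure μ] {Y : ι → Ω → ℝ} {s : Finset ι}
    (hY : ∀ i ∈ s, MemLp (Y i) 2 μ) (hmean : ∀ i ∈ s, ∫ ω, Y i ω ∂μ = 0)
    (hindep : Set.Pairwise ↑s fun i j => IndepFun (Y i) (Y j) μ) (c : ℝ) :
    ∑ i ∈ s, ∫ ω, Y i ω ^ 2 ∂μ ≤ ∫ ω, (c + ∑ i ∈ s, Y i ω) ^ 2 ∂μ := by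
  have hsum : AEStronglyMeasurable (fun ω => ∑ i ∈ s, Y i ω) μ :=
    (memLp_finsetSum s hY).aestronglyMeasurable
  calc ∑ i ∈ s, ∫ ω, Y i ω ^ 2 ∂μ = ∑ i ∈ s, Var[Y i; μ] :=
        sum_congr rfl fun i hi => by rw [variance_eq_sub (hY i hi), hmean i hi]; simp
    _ = Var[∑ i ∈ s, Y i; μ] := (IndepFun.variance_sum hY hindep).symm
    _ = Var[fun ω => c + ∑ i ∈ s, Y i ω; μ] := by
        rw [variance_const_add hsum c, ← Finset.sum_fn]
    _ ≤ ∫ ω, (c + ∑ i ∈ s, Y i ω) ^ 2 ∂μ :=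
        variance_le_expectation_sq (aestronglyMeasurable_const.add hsum)

theorem second_moment_lower_bound_general {Ω : Type*} [MeasurableSpace Ω]
    (μ : Measure Ω) [IsProbabilityMeasure μ]
    (n m : ℕ) (A : Matrix (Fin n) (Fin n) ℝ) (F : Matrix (Fin n) (Fin m) ℝ)
    (x0 : Fin n → ℝ) (w : ℕ → Ω → Fin m → ℝ)
    (hL2 : ∀ t i, MemLp (fun ω => w t ω i) 2 μ)
    (hindep : ∀ s t, s ≠ t → IndepFun (w s) (w t) μ)
    (hmean : ∀ t i, ∫ ω, w t ω i ∂μ = 0)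
    (εw : ℝ)
    (hvar : ∀ t (v : Fin m → ℝ), ∫ ω, (v ⬝ᵥ w t ω) ^ 2 ∂μ ≥ εw * (v ⬝ᵥ v))
    (x : ℕ → Ω → Fin n → ℝ)
    (hx0 : ∀ ω, x 0 ω = x0)
    (hx : ∀ k ω, x (k + 1) ω = A.mulVec (x k ω) + F.mulVec (w k ω)) :
    ∀ k (v : Fin n → ℝ),
      ∫ ω, (v ⬝ᵥ x k ω) ^ 2 ∂μ ≥
        εw * ∑ j ∈ Finset.range k,
          (Fᵀ.mulVec ((Aᵀ ^ j).mulVec v)) ⬝ᵥ (Fᵀ.mulVec ((Aᵀ ^ j).mulVec v)) := by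
  intro k v
  set u : ℕ → Fin m → ℝ := fun j => Fᵀ *ᵥ (Aᵀ ^ j *ᵥ v)
  set Y : ℕ → Ω → ℝ := fun j ω => u j ⬝ᵥ w (k - 1 - j) ω
  have hclosed : ∀ ω, v ⬝ᵥ x k ω = (Aᵀ ^ k *ᵥ v) ⬝ᵥ x0 + ∑ j ∈ range k, Y j ω := fun ω => by
    rw [dotProduct_eq_of_mulVec_recursion A F (x · ω) (w · ω) (hx · ω), hx0]
  have hindepY : Set.Pairwise ↑(range k) fun i j => IndepFun (Y i) (Y j) μ := by
    intro i hi j hj hij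
    rw [coe_range, Set.mem_Iio] at hi hj
    exact (hindep _ _ (by omega)).dotProduct (u i) (u j)
  calc εw * ∑ j ∈ range k, u j ⬝ᵥ u j ≤ ∑ j ∈ range k, ∫ ω, Y j ω ^ 2 ∂μ := by
        rw [mul_sum]; exact sum_le_sum fun j _ => hvar _ _
    _ ≤ ∫ ω, (v ⬝ᵥ x k ω) ^ 2 ∂μ := by
        simp_rw [hclosed]
        refine sum_integral_sq_le_integral_sq_const_add_sum
          (fun j _ => memLp_dotProduct _ (hL2 _)) (fun j _ => ?_) hindepY _
        rw [integral_dotProduct _ fun i => (hL2 _ i).integrable one_le_two]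
        simp [hmean]

/-- For the stochastic recursion `x_{k+1} = A x_k + F w_k` driven by pairwise independent,
mean-zero, square-integrable noise with `𝔼[⟨v,w_t⟩²] ≥ ε_w‖v‖²`, one has
`𝔼[⟨v, x_k⟩²] ≥ ε_w · ∑_{j=0}^{k-1} ‖Fᵀ(Aᵀ)^j v‖²`. -/
theorem second_moment_lower_bound {Ω : Type*} [MeasurableSpace Ω]
    (μ : Measure Ω) [IsProbabilityMeasure μ]
    (n m : ℕ) (A : Matrix (Fin n) (Fin n) ℝ) (F : Matrix (Fin n) (Fin m) ℝ)
    (x0 : Fin n → ℝ) (w : ℕ → Ω → Fin m → ℝ)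
    (hL2 : ∀ t i, MemLp (fun ω => w t ω i) 2 μ)
    (hindep : ∀ s t, s ≠ t → IndepFun (w s) (w t) μ)
    (hmean : ∀ t i, ∫ ω, w t ω i ∂μ = 0)
    (εw : ℝ) (hεw : 0 < εw)
    (hvar : ∀ t (v : Fin m → ℝ), ∫ ω, (v ⬝ᵥ w t ω) ^ 2 ∂μ ≥ εw * (v ⬝ᵥ v))
    (x : ℕ → Ω → Fin n → ℝ)
    (hx0 : ∀ ω, x 0 ω = x0)
    (hx : ∀ k ω, x (k + 1) ω = A.mulVec (x k ω) + F.mulVec (w k ω)) :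
    ∀ k (v : Fin n → ℝ),
      ∫ ω, (v ⬝ᵥ x k ω) ^ 2 ∂μ ≥
        εw * ∑ j ∈ Finset.range k,
          (Fᵀ.mulVec ((Aᵀ ^ j).mulVec v)) ⬝ᵥ (Fᵀ.mulVec ((Aᵀ ^ j).mulVec v)) :=
  second_moment_lower_bound_general μ n m A F x0 w hL2 hindep hmean εw hvar x hx0 hx
end

section
/- Let (Ω, 𝔽, ℙ) be a probability space, let A ∈ ℝ^{n×n}, F ∈ ℝ^{n×m}, x_0 ∈ ℝⁿ (deterministic), and let w_0, w_1, w_2, … be square-integrable ℝ^m-valued random vectors that are pairwise independent, each with mean zero, and satisfying 𝔼[⟨v, w_t⟩²] ≥ ε_w·‖v‖² for some ε_w > 0, all t and all v ∈ ℝ^m. Define x_{k+1} = A x_k + F w_k, and suppose the pair (A, F) is reachable, with ε_R > 0 such that ∑_{j=0}^{n-1} A^j F Fᵀ (Aᵀ)^j ⪰ ε_R·I. Then for every integer N_u > n and every t ∈ ℕ and every v ∈ ℝⁿ, ∑_{k=t}^{t+N_u-1} 𝔼[⟨v, x_k⟩²] ≥ ε_w · (N_u − n) · ε_R · ‖v‖².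 -/
/-!
Unrolling the recursion, `⟨v, x_k⟩ = ⟨v, A^k x₀⟩ + ∑_{j<k} ⟨(A^j F)ᵀ v, w_{k-1-j}⟩`. The noise terms are
pairwise independent, so the variance of `⟨v, x_k⟩` is the sum of their variances, which is at least
`ε_w ∑_{j<k} ‖(A^j F)ᵀ v‖²`; for `k ≥ n` this dominates the reachability Gramian form, hence is at
least `ε_w ε_R ‖v‖²`. At least `N_u - n` indices of the window satisfy `k ≥ n`.
-/

open Matrix MeasureTheory ProbabilityTheory Finset

lemma eq_pow_mulVec_add_sum_of_recursion {R ι κ : Type*} [CommSemiring R] [Fintype ι]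
    [DecidableEq ι] [Fintype κ] (A : Matrix ι ι R) (F : Matrix ι κ R) {x : ℕ → ι → R}
    {u : ℕ → κ → R} (hx : ∀ k, x (k + 1) = A *ᵥ x k + F *ᵥ u k) (k : ℕ) :
    x k = A ^ k *ᵥ x 0 + ∑ j ∈ range k, (A ^ j * F) *ᵥ u (k - 1 - j) := by
  induction k with
  | zero => simp
  | succ k ih =>
    rw [hx, ih, sum_range_succ', mulVec_add, mulVec_mulVec, ← pow_succ', mulVec_sum]
    simp only [mulVec_mulVec, ← Matrix.mul_assoc, ← pow_succ', Nat.sub_sub, pow_zero,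
      Matrix.one_mul, add_tsub_cancel_right, tsub_zero, add_assoc, Nat.add_comm 1]

lemma dotProduct_mul_transpose_mulVec {R m n : Type*} [CommSemiring R] [Fintype m]
    [Fintype n] (M : Matrix m n R) (v : m → R) :
    v ⬝ᵥ (M * Mᵀ) *ᵥ v = (Mᵀ *ᵥ v) ⬝ᵥ (Mᵀ *ᵥ v) := by
  rw [← mulVec_mulVec, dotProduct_mulVec, ← mulVec_transpose]

lemma Matrix.PosSemidef.le_sum_dotProduct_transpose_mulVec {ι m n : Type*} [Fintype m]
    [DecidableEq m] [Fintype n] {s : Finset ι} {M : ι → Matrix m n ℝ} {ε : ℝ}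
    (h : (∑ i ∈ s, M i * (M i)ᵀ - ε • (1 : Matrix m m ℝ)).PosSemidef) (v : m → ℝ) :
    ε * (v ⬝ᵥ v) ≤ ∑ i ∈ s, ((M i)ᵀ *ᵥ v) ⬝ᵥ ((M i)ᵀ *ᵥ v) := by
  have hform := h.dotProduct_mulVec_nonneg v
  simp only [star_trivial, sub_mulVec, dotProduct_sub, smul_mulVec, one_mulVec,
    dotProduct_smul, smul_eq_mul, sum_mulVec, dotProduct_sum,
    dotProduct_mul_transpose_mulVec] at hform
  linarith

section Noise

variable {Ω κ : Type*} [MeasurableSpace Ω] {μ : Measure Ω} [Fintype κ]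

lemma memLp_dotProduct_s8 {W : Ω → κ → ℝ} (hW : ∀ i, MemLp (fun ω => W ω i) 2 μ) (u : κ → ℝ) :
    MemLp (fun ω => u ⬝ᵥ W ω) 2 μ := by
  simpa [dotProduct] using memLp_finsetSum univ fun i _ => (hW i).const_mul (u i)

lemma integral_dotProduct_eq_zero [IsFiniteMeasure μ] {W : Ω → κ → ℝ}
    (hW : ∀ i, MemLp (fun ω => W ω i) 2 μ) (hmean : ∀ i, ∫ ω, W ω i ∂μ = 0) (u : κ → ℝ) :
    ∫ ω, u ⬝ᵥ W ω ∂μ = 0 := by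
  simp only [dotProduct]
  rw [integral_finsetSum _ fun i _ => ((hW i).integrable one_le_two).const_mul (u i)]
  simp [integral_const_mul, hmean]

lemma measurable_dotProduct (u : κ → ℝ) : Measurable fun y : κ → ℝ => u ⬝ᵥ y := by
  simp only [dotProduct]
  fun_prop

end Noise

lemma sub_mul_le_sum_Ico {a : ℕ → ℝ} {b : ℝ} {n : ℕ} (ha : ∀ k, 0 ≤ a k) (hb : 0 ≤ b)
    (hab : ∀ k, n ≤ k → b ≤ a k) (t N : ℕ) :
    ((N : ℝ) - n) * b ≤ ∑ k ∈ Ico t (t + N), a k := by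
  have hcard : (N : ℝ) - n ≤ #(Ico (max t n) (t + N)) := by
    rw [Nat.card_Ico]
    rcases le_total n N with h | h
    · rw [← Nat.cast_sub h]; exact_mod_cast (by omega)
    · have : (N : ℝ) ≤ n := by exact_mod_cast h
      linarith [(Nat.cast_nonneg _ : (0 : ℝ) ≤ ((t + N - max t n : ℕ) : ℝ))]
  calc ((N : ℝ) - n) * b ≤ #(Ico (max t n) (t + N)) * b := mul_le_mul_of_nonneg_right hcard hb
    _ = ∑ k ∈ Ico (max t n) (t + N), b := by rw [sum_const, nsmul_eq_mul]
    _ ≤ ∑ k ∈ Ico (max t n) (t + N), a k :=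
        sum_le_sum fun k hk => hab k ((le_max_right t n).trans (mem_Ico.mp hk).1)
    _ ≤ ∑ k ∈ Ico t (t + N), a k :=
        sum_le_sum_of_subset_of_nonneg (Ico_subset_Ico (le_max_left t n) le_rfl)
          fun k _ _ => ha k

lemma sum_gramian_le_integral_sq_dotProduct {Ω ι κ : Type*} [MeasurableSpace Ω] {μ : Measure Ω}
    [IsProbabilityMeasure μ] [Fintype ι] [DecidableEq ι] [Fintype κ] {A : Matrix ι ι ℝ}
    {F : Matrix ι κ ℝ} {x0 : ι → ℝ} {w : ℕ → Ω → κ → ℝ} {x : ℕ → Ω → ι → ℝ} {εw : ℝ}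
    (hL2 : ∀ t i, MemLp (fun ω => w t ω i) 2 μ)
    (hindep : ∀ s t, s ≠ t → IndepFun (w s) (w t) μ)
    (hmean : ∀ t i, ∫ ω, w t ω i ∂μ = 0)
    (hvar : ∀ t (u : κ → ℝ), εw * (u ⬝ᵥ u) ≤ ∫ ω, (u ⬝ᵥ w t ω) ^ 2 ∂μ)
    (hx0 : ∀ ω, x 0 ω = x0) (hx : ∀ k ω, x (k + 1) ω = A *ᵥ x k ω + F *ᵥ w k ω)
    (k : ℕ) (v : ι → ℝ) :
    εw * ∑ j ∈ range k, ((A ^ j * F)ᵀ *ᵥ v) ⬝ᵥ ((A ^ j * F)ᵀ *ᵥ v) ≤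
      ∫ ω, (v ⬝ᵥ x k ω) ^ 2 ∂μ := by
  set u : ℕ → κ → ℝ := fun j => (A ^ j * F)ᵀ *ᵥ v
  set f : ℕ → Ω → ℝ := fun j ω => u j ⬝ᵥ w (k - 1 - j) ω
  have hf : ∀ j, MemLp (f j) 2 μ := fun j => memLp_dotProduct_s8 (hL2 _) (u j)
  have hdecomp : ∀ ω, v ⬝ᵥ x k ω = v ⬝ᵥ (A ^ k *ᵥ x0) + ∑ j ∈ range k, f j ω := fun ω => by
    rw [eq_pow_mulVec_add_sum_of_recursion (x := (x · ω)) A F (hx · ω) k, hx0, dotProduct_add,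
      dotProduct_sum]
    simp only [f, u, dotProduct_mulVec, mulVec_transpose]
  have hpair : (↑(range k) : Set ℕ).Pairwise fun i j => IndepFun (f i) (f j) μ := by
    intro i hi j hj hij
    simp only [coe_range, Set.mem_Iio] at hi hj
    exact (hindep _ _ (by omega)).comp (measurable_dotProduct _) (measurable_dotProduct _)
  have hsum : MemLp (∑ j ∈ range k, f j) 2 μ := memLp_finsetSum' _ fun j _ => hf j
  calc εw * ∑ j ∈ range k, u j ⬝ᵥ u j
      ≤ ∑ j ∈ range k, ∫ ω, f j ω ^ 2 ∂μ := by
        rw [mul_sum]; exact sum_le_sum fun j _ => hvar _ _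
    _ = ∑ j ∈ range k, Var[f j; μ] := sum_congr rfl fun j _ =>
        (variance_of_integral_eq_zero (hf j).aestronglyMeasurable.aemeasurable
          (integral_dotProduct_eq_zero (hL2 _) (hmean _) _)).symm
    _ = Var[fun ω => v ⬝ᵥ (A ^ k *ᵥ x0) + (∑ j ∈ range k, f j) ω; μ] := by
        rw [← IndepFun.variance_sum (fun j _ => hf j) hpair,
          variance_const_add hsum.aestronglyMeasurable]
    _ ≤ ∫ ω, (v ⬝ᵥ (A ^ k *ᵥ x0) + (∑ j ∈ range k, f j) ω) ^ 2 ∂μ :=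
        variance_le_expectation_sq (aestronglyMeasurable_const.add hsum.aestronglyMeasurable)
    _ = ∫ ω, (v ⬝ᵥ x k ω) ^ 2 ∂μ := by simp only [Finset.sum_apply, hdecomp]

theorem window_second_moment_lower_bound_general {Ω : Type*} [MeasurableSpace Ω]
    (μ : Measure Ω) [IsProbabilityMeasure μ]
    (n m : ℕ) (A : Matrix (Fin n) (Fin n) ℝ) (F : Matrix (Fin n) (Fin m) ℝ)
    (x0 : Fin n → ℝ) (w : ℕ → Ω → Fin m → ℝ)
    (hL2 : ∀ t i, MemLp (fun ω => w t ω i) 2 μ)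
    (hindep : ∀ s t, s ≠ t → IndepFun (w s) (w t) μ)
    (hmean : ∀ t i, ∫ ω, w t ω i ∂μ = 0)
    (εw : ℝ) (hεw : 0 < εw)
    (hvar : ∀ t (v : Fin m → ℝ), ∫ ω, (v ⬝ᵥ w t ω) ^ 2 ∂μ ≥ εw * (v ⬝ᵥ v))
    (x : ℕ → Ω → Fin n → ℝ)
    (hx0 : ∀ ω, x 0 ω = x0)
    (hx : ∀ k ω, x (k + 1) ω = A.mulVec (x k ω) + F.mulVec (w k ω))
    (εR : ℝ) (hεR : 0 < εR)
    (hgram : ((∑ j ∈ Finset.range n, A ^ j * F * Fᵀ * (Aᵀ) ^ j)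
        - εR • (1 : Matrix (Fin n) (Fin n) ℝ)).PosSemidef) :
    ∀ Nu : ℕ, n < Nu → ∀ t : ℕ, ∀ v : Fin n → ℝ,
      ∑ k ∈ Finset.Ico t (t + Nu), ∫ ω, (v ⬝ᵥ x k ω) ^ 2 ∂μ ≥
        εw * ((Nu : ℝ) - (n : ℝ)) * εR * (v ⬝ᵥ v) := by
  intro Nu _ t v
  have hgramian : εR * (v ⬝ᵥ v) ≤ ∑ j ∈ range n, ((A ^ j * F)ᵀ *ᵥ v) ⬝ᵥ ((A ^ j * F)ᵀ *ᵥ v) :=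
    Matrix.PosSemidef.le_sum_dotProduct_transpose_mulVec (M := fun j => A ^ j * F)
      (by simpa only [transpose_mul, transpose_pow, Matrix.mul_assoc] using hgram) v
  have hstep (k : ℕ) (hk : n ≤ k) : εw * (εR * (v ⬝ᵥ v)) ≤ ∫ ω, (v ⬝ᵥ x k ω) ^ 2 ∂μ :=
    calc εw * (εR * (v ⬝ᵥ v))
        ≤ εw * ∑ j ∈ range k, ((A ^ j * F)ᵀ *ᵥ v) ⬝ᵥ ((A ^ j * F)ᵀ *ᵥ v) := by
          refine mul_le_mul_of_nonneg_left (hgramian.trans ?_) hεw.le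
          exact sum_le_sum_of_subset_of_nonneg (range_subset_range.2 hk) fun j _ _ => by
            simpa using dotProduct_self_star_nonneg ((A ^ j * F)ᵀ *ᵥ v)
      _ ≤ ∫ ω, (v ⬝ᵥ x k ω) ^ 2 ∂μ :=
          sum_gramian_le_integral_sq_dotProduct hL2 hindep hmean hvar hx0 hx k v
  have hvv : 0 ≤ v ⬝ᵥ v := by simpa using dotProduct_self_star_nonneg v
  calc εw * ((Nu : ℝ) - n) * εR * (v ⬝ᵥ v) = ((Nu : ℝ) - n) * (εw * (εR * (v ⬝ᵥ v))) := by ring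
    _ ≤ ∑ k ∈ Ico t (t + Nu), ∫ ω, (v ⬝ᵥ x k ω) ^ 2 ∂μ :=
        sub_mul_le_sum_Ico (fun k => integral_nonneg fun _ => sq_nonneg _) (by positivity) hstep t Nu

/-- For the stochastic recursion `x_{k+1} = A x_k + F w_k` driven by pairwise independent,
mean-zero, square-integrable noise with `𝔼[⟨v,w_t⟩²] ≥ ε_w‖v‖²`, if `(A, F)` is reachable
with Gramian `∑_{j<n} A^j F Fᵀ (Aᵀ)^j ⪰ ε_R·I`, then for every `N_u > n`, `t` and `v`,
`∑_{k=t}^{t+N_u-1} 𝔼[⟨v, x_k⟩²] ≥ ε_w (N_u − n) ε_R ‖v‖²`. -/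
theorem window_second_moment_lower_bound {Ω : Type*} [MeasurableSpace Ω]
    (μ : Measure Ω) [IsProbabilityMeasure μ]
    (n m : ℕ) (A : Matrix (Fin n) (Fin n) ℝ) (F : Matrix (Fin n) (Fin m) ℝ)
    (x0 : Fin n → ℝ) (w : ℕ → Ω → Fin m → ℝ)
    (hL2 : ∀ t i, MemLp (fun ω => w t ω i) 2 μ)
    (hindep : ∀ s t, s ≠ t → IndepFun (w s) (w t) μ)
    (hmean : ∀ t i, ∫ ω, w t ω i ∂μ = 0)
    (εw : ℝ) (hεw : 0 < εw)
    (hvar : ∀ t (v : Fin m → ℝ), ∫ ω, (v ⬝ᵥ w t ω) ^ 2 ∂μ ≥ εw * (v ⬝ᵥ v))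
    (x : ℕ → Ω → Fin n → ℝ)
    (hx0 : ∀ ω, x 0 ω = x0)
    (hx : ∀ k ω, x (k + 1) ω = A.mulVec (x k ω) + F.mulVec (w k ω))
    (hreach : (Matrix.of fun (i : Fin n) (jk : Fin n × Fin m) =>
        (A ^ (jk.1 : ℕ) * F) i jk.2).rank = n)
    (εR : ℝ) (hεR : 0 < εR)
    (hgram : ((∑ j ∈ Finset.range n, A ^ j * F * Fᵀ * (Aᵀ) ^ j)
        - εR • (1 : Matrix (Fin n) (Fin n) ℝ)).PosSemidef) :
    ∀ Nu : ℕ, n < Nu → ∀ t : ℕ, ∀ v : Fin n → ℝ,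
      ∑ k ∈ Finset.Ico t (t + Nu), ∫ ω, (v ⬝ᵥ x k ω) ^ 2 ∂μ ≥
        εw * ((Nu : ℝ) - (n : ℝ)) * εR * (v ⬝ᵥ v) :=
  window_second_moment_lower_bound_general μ n m A F x0 w hL2 hindep hmean εw hεw hvar x hx0 hx εR
    hεR hgram
end

section
/- (Theorem 2: persistent excitation under linear feedback with injected noise.) Let n_x, n_u, n_w, p be positive integers, A_0, …, A_p ∈ ℝ^{n_x×n_x}, B_0, …, B_p ∈ ℝ^{n_x×n_u}, K ∈ ℝ^{n_u×n_x}, F ∈ ℝ^{n_x×n_w}, and θ* ∈ ℝ^p. Define A_{K,i} := A_i + B_i K, A_K(θ*) := A_0 + B_0 K + ∑_{i=1}^{p} θ*_i A_{K,i}, B(θ*) := B_0 + ∑_{i=1}^{p} θ*_i B_i, and the regressor Φ(x, u) ∈ ℝ^{n_x×p} whose i-th column is A_i x + B_i u. Let (Ω, 𝔽, ℙ) be a probability space and let s_0, s_1, … (ℝ^{n_u}-valued) and w_0, w_1, … (ℝ^{n_w}-valued) be square-integrable random vectors such that the combined family {s_t} ∪ {w_t} is pairwise independent, each has mean zero, 𝔼[⟨u,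 s_t⟩²] ≥ ε_s·‖u‖² for some ε_s > 0 and all u, t, and each w_t has finite second moments. Let x_0 ∈ ℝ^{n_x} be deterministic, u_t = K x_t + s_t, and x_{t+1} = A_K(θ*) x_t + B(θ*) s_t + F w_t. Assume: (i) the pair (A_K(θ*), B(θ*)) is reachable; (ii) the p block matrices [A_{K,i} B_i] ∈ ℝ^{n_x×(n_x+n_u)}, i = 1, …, p, are linearly independent. Then for every integer N_u > n_x there exists ε_Φ > 0 such that for all t ∈ ℕ and all θ ∈ ℝ^p, ∑_{k=t}^{t+N_u-1} 𝔼[‖Φ(x_k, K x_k + s_k) θ‖²] ≥ ε_Φ·‖θ‖². -/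
open Matrix MeasureTheory ProbabilityTheory

/-!
Write `M(θ) = ∑ θᵢ (Aᵢ + Bᵢ K)` and `N(θ) = ∑ θᵢ Bᵢ`, so that `Φ(x_k, K x_k + s_k) θ =
M(θ) x_k + N(θ) s_k`. Unrolling the closed loop writes this as a deterministic vector plus a sum
of matrix images of the noises `s_j, w_j`. These are centred and pairwise independent, so their
variances add, and the excitation bound on `s` gives, for every `k ≥ n_x`,
`𝔼‖Φ θ‖² ≥ ε_s (‖N(θ)‖² + ∑_{d < n_x} ‖M(θ) A_K^d B(θ*)‖²)` in Frobenius norms. By reachability the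
right-hand side vanishes only if `M(θ) = N(θ) = 0`, hence by linear independence only if `θ = 0`;
it dominates the squared norm of an injective linear image of `θ`, so it is at least a fixed
multiple of `‖θ‖²`. Every window of `N_u > n_x` consecutive times contains such a `k`.
-/

section Pythagoras

variable {Ω ι : Type*} [MeasurableSpace Ω] {μ : Measure Ω} [IsProbabilityMeasure μ]

theorem integral_const_add_sum_sq {f : ι → Ω → ℝ} {L : Finset ι} (c : ℝ)
    (hL2 : ∀ l ∈ L, MemLp (f l) 2 μ) (hmean : ∀ l ∈ L, ∫ ω, f l ω ∂μ = 0)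
    (hind : Set.Pairwise ↑L fun l l' => IndepFun (f l) (f l') μ) :
    ∫ ω, (c + ∑ l ∈ L, f l ω) ^ 2 ∂μ = c ^ 2 + ∑ l ∈ L, ∫ ω, f l ω ^ 2 ∂μ := by
  set S := ∑ l ∈ L, f l
  have hS : MemLp S 2 μ := memLp_finsetSum' L hL2
  have hSmean : ∫ ω, S ω ∂μ = 0 := by
    simp only [S, Finset.sum_apply]
    rw [integral_finsetSum L fun l hl => (hL2 l hl).integrable one_le_two]
    exact Finset.sum_eq_zero hmean
  have hvar : variance S μ = ∑ l ∈ L, ∫ ω, f l ω ^ 2 ∂μ := by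
    rw [IndepFun.variance_sum hL2 hind]
    exact Finset.sum_congr rfl fun l hl =>
      variance_of_integral_eq_zero (hL2 l hl).aemeasurable (hmean l hl)
  calc ∫ ω, (c + ∑ l ∈ L, f l ω) ^ 2 ∂μ = μ[(fun ω => S ω + c) ^ 2] := by
        congr 1; funext ω; simp [S, add_comm]
    _ = variance (fun ω => S ω + c) μ + μ[fun ω => S ω + c] ^ 2 := by
        have hSc : MemLp (fun ω => S ω + c) 2 μ := hS.add (memLp_const c)
        rw [variance_eq_sub hSc]; ring
    _ = c ^ 2 + ∑ l ∈ L, ∫ ω, f l ω ^ 2 ∂μ := by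
        rw [variance_add_const hS.aestronglyMeasurable, hvar,
          integral_add (hS.integrable one_le_two) (integrable_const c), hSmean]
        simp [add_comm]

end Pythagoras

section RandomVector

variable {Ω α β m : Type*} [MeasurableSpace Ω] {μ : Measure Ω} [Fintype α] [Fintype β]

theorem memLp_mulVec_apply {X : Ω → α → ℝ} (hX : ∀ i, MemLp (fun ω => X ω i) 2 μ)
    (C : Matrix m α ℝ) (a : m) : MemLp (fun ω => (C *ᵥ X ω) a) 2 μ :=
  memLp_finsetSum _ fun i _ => (hX i).const_mul (C a i)

theorem integral_mulVec_apply_eq_zero {X : Ω → α → ℝ}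
    (hX : ∀ i, Integrable (fun ω => X ω i) μ) (hX0 : ∀ i, ∫ ω, X ω i ∂μ = 0)
    (C : Matrix m α ℝ) (a : m) : ∫ ω, (C *ᵥ X ω) a ∂μ = 0 := by
  simp only [mulVec, dotProduct]
  rw [integral_finsetSum _ fun i _ => (hX i).const_mul _]
  simp [integral_const_mul, hX0]

theorem ProbabilityTheory.IndepFun.mulVec_apply {X : Ω → α → ℝ} {Y : Ω → β → ℝ}
    (h : IndepFun X Y μ) (C : Matrix m α ℝ) (D : Matrix m β ℝ) (a b : m) :
    IndepFun (fun ω => (C *ᵥ X ω) a) (fun ω => (D *ᵥ Y ω) b) μ :=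
  h.comp (φ := fun v => (C *ᵥ v) a) (ψ := fun v => (D *ᵥ v) b)
    (by simp only [mulVec, dotProduct]; fun_prop) (by simp only [mulVec, dotProduct]; fun_prop)

end RandomVector

structure CenteredPairwiseIndep {Ω α β : Type*} [MeasurableSpace Ω] (μ : Measure Ω)
    (s : ℕ → Ω → α → ℝ) (w : ℕ → Ω → β → ℝ) : Prop where
  memLp_left : ∀ t i, MemLp (fun ω => s t ω i) 2 μ
  memLp_right : ∀ t i, MemLp (fun ω => w t ω i) 2 μ
  integral_left : ∀ t i, ∫ ω, s t ω i ∂μ = 0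
  integral_right : ∀ t i, ∫ ω, w t ω i ∂μ = 0
  indepFun_left : ∀ t t', t ≠ t' → IndepFun (s t) (s t') μ
  indepFun_right : ∀ t t', t ≠ t' → IndepFun (w t) (w t') μ
  indepFun_left_right : ∀ t t', IndepFun (s t) (w t') μ

namespace CenteredPairwiseIndep

variable {Ω α β m : Type*} [MeasurableSpace Ω] {μ : Measure Ω} [IsProbabilityMeasure μ]
  [Fintype α] [Fintype β] [Fintype m] {s : ℕ → Ω → α → ℝ} {w : ℕ → Ω → β → ℝ}

theorem sum_integral_le_integral (hn : CenteredPairwiseIndep μ s w) (c : m → ℝ)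
    (Cs : ℕ → Matrix m α ℝ) (Cw : ℕ → Matrix m β ℝ) (Ts Tw : Finset ℕ) :
    ∑ j ∈ Ts, ∑ a, ∫ ω, (Cs j *ᵥ s j ω) a ^ 2 ∂μ ≤
      ∫ ω, ∑ a, (c + ∑ j ∈ Ts, Cs j *ᵥ s j ω + ∑ j ∈ Tw, Cw j *ᵥ w j ω) a ^ 2 ∂μ := by
  let g (a : m) : ℕ ⊕ ℕ → Ω → ℝ :=
    Sum.elim (fun t ω => (Cs t *ᵥ s t ω) a) (fun t ω => (Cw t *ᵥ w t ω) a)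
  have hg2 (a : m) : ∀ l, MemLp (g a l) 2 μ
    | .inl t => memLp_mulVec_apply (hn.memLp_left t) _ a
    | .inr t => memLp_mulVec_apply (hn.memLp_right t) _ a
  have hg0 (a : m) : ∀ l, ∫ ω, g a l ω ∂μ = 0
    | .inl t => integral_mulVec_apply_eq_zero (fun i => (hn.memLp_left t i).integrable
        one_le_two) (hn.integral_left t) _ a
    | .inr t => integral_mulVec_apply_eq_zero (fun i => (hn.memLp_right t i).integrable
        one_le_two) (hn.integral_right t) _ a
  have hgind (a : m) : Pairwise fun l l' => IndepFun (g a l) (g a l') μ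
    | .inl t, .inl t', h => (hn.indepFun_left t t' (by simpa using h)).mulVec_apply _ _ a a
    | .inl t, .inr t', _ => (hn.indepFun_left_right t t').mulVec_apply _ _ a a
    | .inr t, .inl t', _ => (hn.indepFun_left_right t' t).symm.mulVec_apply _ _ a a
    | .inr t, .inr t', h => (hn.indepFun_right t t' (by simpa using h)).mulVec_apply _ _ a a
  have hpt (ω : Ω) (a : m) : (c + ∑ j ∈ Ts, Cs j *ᵥ s j ω + ∑ j ∈ Tw, Cw j *ᵥ w j ω) a =
      c a + ∑ l ∈ Ts.disjSum Tw, g a l ω := by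
    simp [Finset.sum_disjSum, g, add_assoc]
  have hint (a : m) : Integrable (fun ω => (c a + ∑ l ∈ Ts.disjSum Tw, g a l ω) ^ 2) μ :=
    ((memLp_const (c a)).add (memLp_finsetSum _ fun l _ => hg2 a l)).integrable_sq
  have hpyth (a : m) : ∫ ω, (c a + ∑ l ∈ Ts.disjSum Tw, g a l ω) ^ 2 ∂μ =
      c a ^ 2 + ∑ j ∈ Ts, ∫ ω, (Cs j *ᵥ s j ω) a ^ 2 ∂μ +
        ∑ j ∈ Tw, ∫ ω, (Cw j *ᵥ w j ω) a ^ 2 ∂μ := by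
    rw [integral_const_add_sum_sq _ (fun l _ => hg2 a l) (fun l _ => hg0 a l)
      ((hgind a).set_pairwise _), Finset.sum_disjSum, add_assoc]
    rfl
  simp_rw [hpt]
  rw [integral_finsetSum _ fun a _ => hint a]
  simp_rw [hpyth]
  rw [Finset.sum_comm]
  gcongr with a
  have : 0 ≤ ∑ j ∈ Tw, ∫ ω, (Cw j *ᵥ w j ω) a ^ 2 ∂μ :=
    Finset.sum_nonneg fun j _ => integral_nonneg fun ω => sq_nonneg _
  nlinarith [sq_nonneg (c a)]

end CenteredPairwiseIndep

theorem Matrix.eq_pow_mulVec_add_sum {R n : Type*} [CommRing R] [Fintype n] [DecidableEq n]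
    (A : Matrix n n R) {x e : ℕ → n → R} (hx : ∀ t, x (t + 1) = A *ᵥ x t + e t) (k : ℕ) :
    x k = A ^ k *ᵥ x 0 + ∑ j ∈ Finset.range k, A ^ (k - 1 - j) *ᵥ e j := by
  induction k with
  | zero => simp
  | succ k ih =>
    have hpow : ∀ j ∈ Finset.range k, A *ᵥ (A ^ (k - 1 - j) *ᵥ e j) = A ^ (k - j) *ᵥ e j := by
      intro j hj
      rw [mulVec_mulVec, ← pow_succ', show k - 1 - j + 1 = k - j by
        have := Finset.mem_range.1 hj; omega]
    rw [hx, ih, mulVec_add, Matrix.mulVec_sum, Finset.sum_congr rfl hpow, mulVec_mulVec,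
      ← pow_succ', Finset.sum_range_succ]
    simp [add_assoc]

theorem Matrix.eq_zero_of_mul_eq_zero_of_rank_eq_card {K l m n : Type*} [Field K] [Fintype m]
    [Fintype n] {R : Matrix m n K} (hR : R.rank = Fintype.card m) {M : Matrix l m K}
    (h : M * R = 0) : M = 0 := by
  have hrows : LinearIndependent K R.row := by
    rw [linearIndependent_iff_card_eq_finrank_span, Set.finrank, ← rank_eq_finrank_span_row, hR]
  ext a j
  have hMa : M a ᵥ* R = 0 ᵥ* R := by
    rw [zero_vecMul, ← Matrix.mul_apply_eq_vecMul, h]; rfl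
  exact congrFun (vecMul_injective_iff.2 hrows hMa) j

def Matrix.reachability {R m : Type*} [CommRing R] {n : ℕ} (A : Matrix (Fin n) (Fin n) R)
    (B : Matrix (Fin n) m R) : Matrix (Fin n) (Fin n × m) R :=
  of fun i jk => (A ^ (jk.1 : ℕ) * B) i jk.2

theorem Matrix.eq_zero_of_forall_mul_pow_mul_eq_zero {K l m : Type*} [Field K] [Fintype m]
    {n : ℕ} {A : Matrix (Fin n) (Fin n) K} {B : Matrix (Fin n) m K}
    (hAB : (reachability A B).rank = n) {M : Matrix l (Fin n) K}
    (hM : ∀ d : Fin n, M * (A ^ (d : ℕ) * B) = 0) : M = 0 := by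
  refine eq_zero_of_mul_eq_zero_of_rank_eq_card (by rwa [Fintype.card_fin]) ?_
  ext a jk
  simpa [reachability, mul_apply] using congrFun (congrFun (hM jk.1) a) jk.2

theorem sum_mul_regressor_eq {n m k p : Type*} [Fintype n] [Fintype m] [Fintype p]
    (A : p → Matrix k n ℝ) (B : p → Matrix k m ℝ) (K : Matrix m n ℝ) (θ : p → ℝ)
    (x : n → ℝ) (s : m → ℝ) (a : k) :
    ∑ i, θ i * (A i *ᵥ x + B i *ᵥ (K *ᵥ x + s)) a =
      ((∑ i, θ i • (A i + B i * K)) *ᵥ x + (∑ i, θ i • B i) *ᵥ s) a := by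
  simp only [Matrix.sum_mulVec, smul_mulVec, add_mulVec, mulVec_add, ← mulVec_mulVec,
    Pi.add_apply, Finset.sum_apply, Pi.smul_apply, smul_eq_mul, ← Finset.sum_add_distrib]
  exact Finset.sum_congr rfl fun i _ => by ring

theorem pi_norm_sq_le_sum {κ : Type*} {G : κ → Type*} [Fintype κ]
    [∀ d, SeminormedAddCommGroup (G d)] (f : ∀ d, G d) : ‖f‖ ^ 2 ≤ ∑ d, ‖f d‖ ^ 2 := by
  have hsqrt : ‖f‖ ≤ √(∑ d, ‖f d‖ ^ 2) :=
    (pi_norm_le_iff_of_nonneg (Real.sqrt_nonneg _)).2 fun d => Real.le_sqrt_of_sq_le <|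
      Finset.single_le_sum (f := fun d => ‖f d‖ ^ 2) (fun _ _ => sq_nonneg _) (Finset.mem_univ d)
  calc ‖f‖ ^ 2 ≤ √(∑ d, ‖f d‖ ^ 2) ^ 2 := by gcongr
    _ = ∑ d, ‖f d‖ ^ 2 := Real.sq_sqrt (Finset.sum_nonneg fun _ _ => sq_nonneg _)

theorem LinearIndependent.exists_pos_mul_dotProduct_le {ι F : Type*} [Fintype ι]
    [NormedAddCommGroup F] [NormedSpace ℝ F] {v : ι → F} (hv : LinearIndependent ℝ v) :
    ∃ c > 0, ∀ θ : ι → ℝ, c * (θ ⬝ᵥ θ) ≤ ‖∑ i, θ i • v i‖ ^ 2 := by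
  let L := Fintype.linearCombination ℝ v ∘ₗ (EuclideanSpace.equiv ι ℝ).toLinearMap
  have hL : Function.Injective L :=
    hv.fintypeLinearCombination_injective.comp (EuclideanSpace.equiv ι ℝ).injective
  obtain ⟨K, -, hK⟩ := L.exists_antilipschitzWith (LinearMap.ker_eq_bot.2 hL)
  obtain ⟨c, hc, hcL⟩ := antilipschitzWith_iff_exists_mul_le_norm.1 ⟨K, hK⟩
  refine ⟨c ^ 2, by positivity, fun θ => ?_⟩
  have hθ : θ ⬝ᵥ θ = ‖WithLp.toLp 2 θ‖ ^ 2 := by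
    rw [EuclideanSpace.real_norm_sq_eq]; simp [dotProduct, sq]
  have hLθ : L (WithLp.toLp 2 θ) = ∑ i, θ i • v i := by
    simp [L, Fintype.linearCombination_apply]
  rw [hθ, ← mul_pow, ← hLθ]
  gcongr
  exact hcL _

section Frobenius

attribute [local instance] Matrix.frobeniusNormedAddCommGroup Matrix.frobeniusNormedSpace

theorem Matrix.frobenius_norm_sq_eq_sum_dotProduct_s13 {m n : Type*} [Fintype m] [Fintype n]
    (C : Matrix m n ℝ) : ‖C‖ ^ 2 = ∑ a, C a ⬝ᵥ C a := by
  rw [frobenius_norm_def, ← Real.sqrt_eq_rpow, Real.sq_sqrt (by positivity)]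
  simp [dotProduct, sq]

variable {Ω α β ι m : Type*} [MeasurableSpace Ω] {μ : Measure Ω} [Fintype α] [Fintype β]
  [Fintype ι] [Fintype m]

theorem mul_frobenius_norm_sq_le_sum_integral {X : Ω → α → ℝ} {ε : ℝ}
    (hvar : ∀ v, ε * (v ⬝ᵥ v) ≤ ∫ ω, (v ⬝ᵥ X ω) ^ 2 ∂μ) (C : Matrix m α ℝ) :
    ε * ‖C‖ ^ 2 ≤ ∑ a, ∫ ω, (C *ᵥ X ω) a ^ 2 ∂μ := by
  rw [frobenius_norm_sq_eq_sum_dotProduct_s13, Finset.mul_sum]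
  exact Finset.sum_le_sum fun a _ => hvar (C a)

theorem exists_pos_mul_dotProduct_le_norm_sq_add_sum {n : ℕ} {A : Matrix (Fin n) (Fin n) ℝ}
    {B : Matrix (Fin n) α ℝ} (hAB : (reachability A B).rank = n)
    {G : ι → Matrix (Fin n) (Fin n) ℝ} {H : ι → Matrix (Fin n) α ℝ}
    (hGH : LinearIndependent ℝ fun i => fromCols (G i) (H i)) :
    ∃ c > 0, ∀ θ : ι → ℝ, c * (θ ⬝ᵥ θ) ≤
      ‖∑ i, θ i • H i‖ ^ 2 + ∑ d ∈ Finset.range n, ‖(∑ i, θ i • G i) * (A ^ d * B)‖ ^ 2 := by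
  let v (i : ι) (o : Option (Fin n)) : Matrix (Fin n) α ℝ :=
    o.elim (H i) fun d => G i * (A ^ (d : ℕ) * B)
  have hv_apply (θ : ι → ℝ) : ∀ o, (∑ i, θ i • v i) o =
      o.elim (∑ i, θ i • H i) fun d => (∑ i, θ i • G i) * (A ^ (d : ℕ) * B)
    | none => by simp [v]
    | some d => by simp [v, Matrix.sum_mul]
  have hv : LinearIndependent ℝ v := by
    refine Fintype.linearIndependent_iff.2 fun θ hθ => ?_
    have hH : ∑ i, θ i • H i = 0 := by simpa [hv_apply] using congrFun hθ none
    have hG : ∑ i, θ i • G i = 0 := eq_zero_of_forall_mul_pow_mul_eq_zero hAB fun d => by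
      simpa [hv_apply] using congrFun hθ (some d)
    refine Fintype.linearIndependent_iff.1 hGH θ ?_
    ext a (j | j)
    · simpa [Matrix.sum_apply] using congrFun (congrFun hG a) j
    · simpa [Matrix.sum_apply] using congrFun (congrFun hH a) j
  obtain ⟨c, hc, hcv⟩ := hv.exists_pos_mul_dotProduct_le
  refine ⟨c, hc, fun θ => (hcv θ).trans ((pi_norm_sq_le_sum _).trans_eq ?_)⟩
  simp only [hv_apply, Fintype.sum_option, Option.elim_none, Option.elim_some]
  rw [Fin.sum_univ_eq_sum_range (fun d => ‖(∑ i, θ i • G i) * (A ^ d * B)‖ ^ 2)]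

variable [IsProbabilityMeasure μ] {s : ℕ → Ω → α → ℝ} {w : ℕ → Ω → β → ℝ}

theorem CenteredPairwiseIndep.mul_norm_sq_le_integral_output {σ : Type*} [Fintype σ]
    [DecidableEq σ] (hn : CenteredPairwiseIndep μ s w) {ε : ℝ}
    (hvar : ∀ t v, ε * (v ⬝ᵥ v) ≤ ∫ ω, (v ⬝ᵥ s t ω) ^ 2 ∂μ)
    {A : Matrix σ σ ℝ} {B : Matrix σ α ℝ} {F : Matrix σ β ℝ} {x0 : σ → ℝ}
    {x : ℕ → Ω → σ → ℝ} (hx0 : ∀ ω, x 0 ω = x0)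
    (hx : ∀ t ω, x (t + 1) ω = A *ᵥ x t ω + B *ᵥ s t ω + F *ᵥ w t ω)
    (M : Matrix m σ ℝ) (N : Matrix m α ℝ) (k : ℕ) :
    ε * (‖N‖ ^ 2 + ∑ d ∈ Finset.range k, ‖M * (A ^ d * B)‖ ^ 2) ≤
      ∫ ω, ∑ a, (M *ᵥ x k ω + N *ᵥ s k ω) a ^ 2 ∂μ := by
  -- `s k` enters only through `N`; the earlier noises enter through the state `x k`.
  let Cs (j : ℕ) : Matrix m α ℝ := if j = k then N else M * (A ^ (k - 1 - j) * B)
  let Cw (j : ℕ) : Matrix m β ℝ := M * (A ^ (k - 1 - j) * F)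
  have hCs : ∀ j ∈ Finset.range k, Cs j = M * (A ^ (k - 1 - j) * B) := fun j hj =>
    if_neg (Finset.mem_range.1 hj).ne
  have hCsk : Cs k = N := if_pos rfl
  have hdecomp (ω : Ω) : M *ᵥ x k ω + N *ᵥ s k ω = M *ᵥ (A ^ k *ᵥ x0) +
      ∑ j ∈ Finset.range (k + 1), Cs j *ᵥ s j ω + ∑ j ∈ Finset.range k, Cw j *ᵥ w j ω := by
    have hsum : ∑ j ∈ Finset.range k, Cs j *ᵥ s j ω =
        ∑ j ∈ Finset.range k, (M * (A ^ (k - 1 - j) * B)) *ᵥ s j ω :=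
      Finset.sum_congr rfl fun j hj => by rw [hCs j hj]
    rw [A.eq_pow_mulVec_add_sum (x := fun t => x t ω) (e := fun t => B *ᵥ s t ω + F *ᵥ w t ω)
      (fun t => by rw [hx, add_assoc]) k, hx0, Finset.sum_range_succ, hsum, hCsk]
    simp only [Cw, mulVec_add, mulVec_sum, ← mulVec_mulVec, Finset.sum_add_distrib]
    abel
  have hnorm : ∑ j ∈ Finset.range k, ‖Cs j‖ ^ 2 =
      ∑ d ∈ Finset.range k, ‖M * (A ^ d * B)‖ ^ 2 := by
    rw [Finset.sum_congr rfl fun j hj => by rw [hCs j hj]]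
    exact Finset.sum_range_reflect (fun d => ‖M * (A ^ d * B)‖ ^ 2) k
  simp_rw [hdecomp]
  refine le_trans ?_ (hn.sum_integral_le_integral _ Cs Cw (Finset.range (k + 1)) (Finset.range k))
  calc ε * (‖N‖ ^ 2 + ∑ d ∈ Finset.range k, ‖M * (A ^ d * B)‖ ^ 2)
      = ∑ j ∈ Finset.range (k + 1), ε * ‖Cs j‖ ^ 2 := by
        rw [← Finset.mul_sum, Finset.sum_range_succ, hnorm, hCsk, add_comm]
    _ ≤ _ := Finset.sum_le_sum fun j _ => mul_frobenius_norm_sq_le_sum_integral (hvar j) (Cs j)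

theorem CenteredPairwiseIndep.exists_pos_mul_dotProduct_le_integral_regressor {n : ℕ}
    (hn : CenteredPairwiseIndep μ s w) {ε : ℝ} (hε : 0 < ε)
    (hvar : ∀ t v, ε * (v ⬝ᵥ v) ≤ ∫ ω, (v ⬝ᵥ s t ω) ^ 2 ∂μ)
    {A : Matrix (Fin n) (Fin n) ℝ} {B : Matrix (Fin n) α ℝ} {F : Matrix (Fin n) β ℝ}
    {x0 : Fin n → ℝ} {x : ℕ → Ω → Fin n → ℝ} (hx0 : ∀ ω, x 0 ω = x0)
    (hx : ∀ t ω, x (t + 1) ω = A *ᵥ x t ω + B *ᵥ s t ω + F *ᵥ w t ω)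
    (hAB : (reachability A B).rank = n)
    {G : ι → Matrix (Fin n) (Fin n) ℝ} {H : ι → Matrix (Fin n) α ℝ}
    (hGH : LinearIndependent ℝ fun i => fromCols (G i) (H i)) :
    ∃ c > 0, ∀ k, n ≤ k → ∀ θ : ι → ℝ, c * (θ ⬝ᵥ θ) ≤
      ∫ ω, ∑ a, ((∑ i, θ i • G i) *ᵥ x k ω + (∑ i, θ i • H i) *ᵥ s k ω) a ^ 2 ∂μ := by
  obtain ⟨c, hc, hcoer⟩ := exists_pos_mul_dotProduct_le_norm_sq_add_sum hAB hGH
  refine ⟨ε * c, mul_pos hε hc, fun k hk θ => ?_⟩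
  calc ε * c * (θ ⬝ᵥ θ)
      ≤ ε * (‖∑ i, θ i • H i‖ ^ 2 +
          ∑ d ∈ Finset.range n, ‖(∑ i, θ i • G i) * (A ^ d * B)‖ ^ 2) := by
        rw [mul_assoc]; gcongr; exact hcoer θ
    _ ≤ ε * (‖∑ i, θ i • H i‖ ^ 2 +
          ∑ d ∈ Finset.range k, ‖(∑ i, θ i • G i) * (A ^ d * B)‖ ^ 2) := by
        gcongr
    _ ≤ _ := hn.mul_norm_sq_le_integral_output hvar hx0 hx _ _ k

end Frobenius

theorem pe_under_linear_feedback_with_noise_general {Ω : Type*} [MeasurableSpace Ω]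
    (μ : Measure Ω) [IsProbabilityMeasure μ]
    (nx nu nw p : ℕ)
    (A : Fin p → Matrix (Fin nx) (Fin nx) ℝ)
    (B : Fin p → Matrix (Fin nx) (Fin nu) ℝ)
    (K : Matrix (Fin nu) (Fin nx) ℝ) (F : Matrix (Fin nx) (Fin nw) ℝ)
    -- closed-loop matrices A_K(θ*) and B(θ*)
    (AK : Matrix (Fin nx) (Fin nx) ℝ)
    (Bθ : Matrix (Fin nx) (Fin nu) ℝ)
    -- injected noise and disturbance assumptions
    (s : ℕ → Ω → Fin nu → ℝ) (w : ℕ → Ω → Fin nw → ℝ)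
    (hsL2 : ∀ t i, MemLp (fun ω => s t ω i) 2 μ)
    (hwL2 : ∀ t i, MemLp (fun ω => w t ω i) 2 μ)
    -- the combined family {s_t} ∪ {w_t} is pairwise independent
    (hss : ∀ t t', t ≠ t' → IndepFun (s t) (s t') μ)
    (hww : ∀ t t', t ≠ t' → IndepFun (w t) (w t') μ)
    (hsw : ∀ t t', IndepFun (s t) (w t') μ)
    (hsmean : ∀ t i, ∫ ω, s t ω i ∂μ = 0)
    (hwmean : ∀ t i, ∫ ω, w t ω i ∂μ = 0)
    (εs : ℝ) (hεs : 0 < εs)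
    (hsvar : ∀ t (u : Fin nu → ℝ), ∫ ω, (u ⬝ᵥ s t ω) ^ 2 ∂μ ≥ εs * (u ⬝ᵥ u))
    -- state trajectory and input u_t = K x_t + s_t
    (x0 : Fin nx → ℝ) (x : ℕ → Ω → Fin nx → ℝ) (u : ℕ → Ω → Fin nu → ℝ)
    (hx0 : ∀ ω, x 0 ω = x0)
    (hu : ∀ t ω, u t ω = K.mulVec (x t ω) + s t ω)
    (hx : ∀ t ω, x (t + 1) ω =
      AK.mulVec (x t ω) + Bθ.mulVec (s t ω) + F.mulVec (w t ω))
    -- (i) reachability of (A_K(θ*), B(θ*))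
    (hreach : (Matrix.of fun (i : Fin nx) (jk : Fin nx × Fin nu) =>
        (AK ^ (jk.1 : ℕ) * Bθ) i jk.2).rank = nx)
    -- (ii) linear independence of the block matrices [A_{K,i}  B_i]
    (hli : ∀ θ : Fin p → ℝ,
      ∑ i, θ i • Matrix.fromCols (A i + B i * K) (B i) = 0 → θ = 0) :
    ∀ Nu : ℕ, nx < Nu → ∃ εΦ > (0 : ℝ), ∀ t : ℕ, ∀ θ : Fin p → ℝ,
      ∑ k ∈ Finset.Ico t (t + Nu),
        ∫ ω, ∑ j, (∑ i, θ i *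
            ((A i).mulVec (x k ω) + (B i).mulVec (u k ω)) j) ^ 2 ∂μ ≥
        εΦ * (θ ⬝ᵥ θ) := by
  intro Nu hNu
  have hnoise : CenteredPairwiseIndep μ s w := ⟨hsL2, hwL2, hsmean, hwmean, hss, hww, hsw⟩
  obtain ⟨c, hc, hpe⟩ := hnoise.exists_pos_mul_dotProduct_le_integral_regressor hεs hsvar hx0 hx
    hreach (Fintype.linearIndependent_iff.2 fun θ hθ => congrFun (hli θ hθ))
  refine ⟨c, hc, fun t θ => ?_⟩
  have hlast : t + Nu - 1 ∈ Finset.Ico t (t + Nu) := Finset.mem_Ico.2 ⟨by omega, by omega⟩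
  calc c * (θ ⬝ᵥ θ) ≤ _ := hpe (t + Nu - 1) (by omega) θ
    _ ≤ _ := by
      simp_rw [hu, sum_mul_regressor_eq]
      exact Finset.single_le_sum (f := fun k => ∫ ω, ∑ a,
          ((∑ i, θ i • (A i + B i * K)) *ᵥ x k ω + (∑ i, θ i • B i) *ᵥ s k ω) a ^ 2 ∂μ)
        (fun k _ => integral_nonneg fun ω => Finset.sum_nonneg fun a _ => sq_nonneg _) hlast

/-- Theorem 2 (persistent excitation under linear feedback with injected noise): for the
closed-loop system `x_{t+1} = A_K(θ*) x_t + B(θ*) s_t + F w_t` with `u_t = K x_t + s_t`,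
where the combined family `{s_t} ∪ {w_t}` is pairwise independent, mean zero and
square-integrable, and `𝔼[⟨u,s_t⟩²] ≥ ε_s‖u‖²`, if `(A_K(θ*), B(θ*))` is reachable and the
block matrices `[A_{K,i} B_i]` are linearly independent, then for every `N_u > n_x` there
exists `ε_Φ > 0` with `∑_{k=t}^{t+N_u-1} 𝔼[‖Φ(x_k, K x_k + s_k) θ‖²] ≥ ε_Φ‖θ‖²`. -/
theorem pe_under_linear_feedback_with_noise {Ω : Type*} [MeasurableSpace Ω]
    (μ : Measure Ω) [IsProbabilityMeasure μ]
    (nx nu nw p : ℕ) (hnx : 0 < nx) (hnu : 0 < nu) (hnw : 0 < nw) (hp : 0 < p)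
    (A0 : Matrix (Fin nx) (Fin nx) ℝ) (A : Fin p → Matrix (Fin nx) (Fin nx) ℝ)
    (B0 : Matrix (Fin nx) (Fin nu) ℝ) (B : Fin p → Matrix (Fin nx) (Fin nu) ℝ)
    (K : Matrix (Fin nu) (Fin nx) ℝ) (F : Matrix (Fin nx) (Fin nw) ℝ)
    (θs : Fin p → ℝ)
    -- closed-loop matrices A_K(θ*) and B(θ*)
    (AK : Matrix (Fin nx) (Fin nx) ℝ)
    (hAK : AK = A0 + B0 * K + ∑ i, θs i • (A i + B i * K))
    (Bθ : Matrix (Fin nx) (Fin nu) ℝ)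
    (hBθ : Bθ = B0 + ∑ i, θs i • B i)
    -- injected noise and disturbance assumptions
    (s : ℕ → Ω → Fin nu → ℝ) (w : ℕ → Ω → Fin nw → ℝ)
    (hsL2 : ∀ t i, MemLp (fun ω => s t ω i) 2 μ)
    (hwL2 : ∀ t i, MemLp (fun ω => w t ω i) 2 μ)
    -- the combined family {s_t} ∪ {w_t} is pairwise independent
    (hss : ∀ t t', t ≠ t' → IndepFun (s t) (s t') μ)
    (hww : ∀ t t', t ≠ t' → IndepFun (w t) (w t') μ)
    (hsw : ∀ t t', IndepFun (s t) (w t') μ)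
    (hsmean : ∀ t i, ∫ ω, s t ω i ∂μ = 0)
    (hwmean : ∀ t i, ∫ ω, w t ω i ∂μ = 0)
    (εs : ℝ) (hεs : 0 < εs)
    (hsvar : ∀ t (u : Fin nu → ℝ), ∫ ω, (u ⬝ᵥ s t ω) ^ 2 ∂μ ≥ εs * (u ⬝ᵥ u))
    -- state trajectory and input u_t = K x_t + s_t
    (x0 : Fin nx → ℝ) (x : ℕ → Ω → Fin nx → ℝ) (u : ℕ → Ω → Fin nu → ℝ)
    (hx0 : ∀ ω, x 0 ω = x0)
    (hu : ∀ t ω, u t ω = K.mulVec (x t ω) + s t ω)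
    (hx : ∀ t ω, x (t + 1) ω =
      AK.mulVec (x t ω) + Bθ.mulVec (s t ω) + F.mulVec (w t ω))
    -- (i) reachability of (A_K(θ*), B(θ*))
    (hreach : (Matrix.of fun (i : Fin nx) (jk : Fin nx × Fin nu) =>
        (AK ^ (jk.1 : ℕ) * Bθ) i jk.2).rank = nx)
    -- (ii) linear independence of the block matrices [A_{K,i}  B_i]
    (hli : ∀ θ : Fin p → ℝ,
      ∑ i, θ i • Matrix.fromCols (A i + B i * K) (B i) = 0 → θ = 0) :
    ∀ Nu : ℕ, nx < Nu → ∃ εΦ > (0 : ℝ), ∀ t : ℕ, ∀ θ : Fin p → ℝ,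
      ∑ k ∈ Finset.Ico t (t + Nu),
        ∫ ω, ∑ j, (∑ i, θ i *
            ((A i).mulVec (x k ω) + (B i).mulVec (u k ω)) j) ^ 2 ∂μ ≥
        εΦ * (θ ⬝ᵥ θ) :=
  pe_under_linear_feedback_with_noise_general μ nx nu nw p A B K F AK Bθ s w hsL2 hwL2 hss hww hsw
    hsmean hwmean εs hεs hsvar x0 x u hx0 hu hx hreach hli
end

section
/- Let P be an n×n real symmetric positive definite matrix and let A_1, …, A_m be n×n real matrices satisfying the strict Lyapunov LMIs P − A_jᵀ P A_j ≻ 0 for every j = 1, …, m. Then for every matrix A in the convex hull of {A_1, …, A_m} (i.e. A = ∑_j λ_j A_j with λ_j ≥ 0, ∑_j λ_j = 1), one has P − Aᵀ P A ≻ 0. -/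
/-! For a fixed `x ≠ 0`, the map `A ↦ (A x)ᵀ P (A x)` is convex because `P ⪰ 0`, so the condition
`(A x)ᵀ P (A x) < xᵀ P x` cuts out a convex set of matrices `A`. The set of `A` with
`P - Aᵀ P A ≻ 0` is the intersection of these sets over all `x ≠ 0`, hence convex, and so it
contains every convex combination of its elements. -/

open Matrix

namespace Matrix

variable {n : Type*} [Fintype n]

theorem dotProduct_sub_transpose_mul_mul_mulVec {R : Type*} [CommRing R]
    (P A : Matrix n n R) (x : n → R) :
    x ⬝ᵥ (P - Aᵀ * P * A) *ᵥ x = x ⬝ᵥ P *ᵥ x - A *ᵥ x ⬝ᵥ P *ᵥ (A *ᵥ x) := by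
  rw [sub_mulVec, dotProduct_sub, ← mulVec_mulVec, ← mulVec_mulVec, dotProduct_mulVec x Aᵀ,
    vecMul_transpose]

theorem PosSemidef.convexOn_dotProduct_mulVec {P : Matrix n n ℝ} (hP : P.PosSemidef) :
    ConvexOn ℝ Set.univ fun v => v ⬝ᵥ P *ᵥ v := by
  refine ⟨convex_univ, fun x _ y _ a b ha hb hab => ?_⟩
  have hdiff := hP.dotProduct_mulVec_nonneg (x - y)
  simp only [star_trivial, mulVec_sub, sub_dotProduct, dotProduct_sub] at hdiff
  simp only [mulVec_add, mulVec_smul, add_dotProduct, dotProduct_add, smul_dotProduct,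
    dotProduct_smul, smul_eq_mul]
  -- with `b = 1 - a`, the convexity gap is exactly `a * b * ((x - y) ⬝ᵥ P *ᵥ (x - y))`
  obtain rfl : b = 1 - a := by linarith
  linear_combination mul_nonneg (mul_nonneg ha hb) hdiff

theorem posDef_sub_transpose_mul_mul_iff {P A : Matrix n n ℝ} (hP : P.IsHermitian) :
    (P - Aᵀ * P * A).PosDef ↔ ∀ x ≠ 0, A *ᵥ x ⬝ᵥ P *ᵥ (A *ᵥ x) < x ⬝ᵥ P *ᵥ x := by
  have hherm : (P - Aᵀ * P * A).IsHermitian := by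
    simpa [conjTranspose_eq_transpose_of_trivial] using
      hP.sub (isHermitian_conjTranspose_mul_mul A hP)
  simp only [posDef_iff_dotProduct_mulVec, hherm, true_and, star_trivial,
    dotProduct_sub_transpose_mul_mul_mulVec, sub_pos]

theorem convex_setOf_posDef_sub_transpose_mul_mul {P : Matrix n n ℝ} (hP : P.PosSemidef) :
    Convex ℝ {A : Matrix n n ℝ | (P - Aᵀ * P * A).PosDef} := by
  intro A hA B hB a b ha hb hab
  simp only [posDef_sub_transpose_mul_mul_iff hP.isHermitian] at hA hB ⊢
  intro x hx
  calc (a • A + b • B) *ᵥ x ⬝ᵥ P *ᵥ ((a • A + b • B) *ᵥ x)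
      ≤ a * (A *ᵥ x ⬝ᵥ P *ᵥ (A *ᵥ x)) + b * (B *ᵥ x ⬝ᵥ P *ᵥ (B *ᵥ x)) := by
        rw [add_mulVec, smul_mulVec, smul_mulVec]
        exact hP.convexOn_dotProduct_mulVec.2 trivial trivial ha hb hab
    _ < x ⬝ᵥ P *ᵥ x := convex_Iio (x ⬝ᵥ P *ᵥ x) (hA x hx) (hB x hx) ha hb hab

end Matrix

theorem lyapunov_lmi_convex_hull_general (n m : ℕ)
    (P : Matrix (Fin n) (Fin n) ℝ) (hP : P.PosDef)
    (A : Fin m → Matrix (Fin n) (Fin n) ℝ)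
    (hA : ∀ j, (P - (A j)ᵀ * P * (A j)).PosDef)
    (lam : Fin m → ℝ) (hlam : ∀ j, 0 ≤ lam j) (hsum : ∑ j, lam j = 1) :
    (P - (∑ j, lam j • A j)ᵀ * P * (∑ j, lam j • A j)).PosDef :=
  (convex_setOf_posDef_sub_transpose_mul_mul hP.posSemidef).sum_mem
    (fun j _ => hlam j) hsum (fun j _ => hA j)

/-- If `P ≻ 0` and the strict Lyapunov LMIs `P − A_jᵀ P A_j ≻ 0` hold for `j = 1, …, m`,
then `P − Aᵀ P A ≻ 0` for every convex combination `A = ∑_j λ_j A_j`. -/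
theorem lyapunov_lmi_convex_hull (n m : ℕ)
    (P : Matrix (Fin n) (Fin n) ℝ) (hPsymm : P.IsSymm) (hP : P.PosDef)
    (A : Fin m → Matrix (Fin n) (Fin n) ℝ)
    (hA : ∀ j, (P - (A j)ᵀ * P * (A j)).PosDef)
    (lam : Fin m → ℝ) (hlam : ∀ j, 0 ≤ lam j) (hsum : ∑ j, lam j = 1) :
    (P - (∑ j, lam j • A j)ᵀ * P * (∑ j, lam j • A j)).PosDef :=
  lyapunov_lmi_convex_hull_general n m P hP A hA lam hlam hsum
end
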